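/- There exists a finite simple connected graph G with at least two vertices such that μ(G) > max over all pairs of adjacent vertices v_i ~ v_j of G of m_i·m_j·(d_i + d_j)/(d_i·d_j). (This disproves conjectured edge-maximum bound 64 of Brankov, Hansen and Stevanović.) -/

import Mathlib

noncomputable section

open Finset

/-- The degree of a vertex, as a real number. -/
def degR {V : Type*} [Fintype V] (G : SimpleGraph V) (v : V) : ℝ :=
  letI := Classical.decRel G.Adj
  (G.degree v : ℝ)

/-- The average degree of the neighbours of a vertex, as a real number:
`m_v = (∑_{u ~ v} d_u) / d_v`. -/
def avgDegR {V : Type*} [Fintype V] (G : SimpleGraph V) (v : V) : ℝ :=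
  letI := Classical.decRel G.Adj
  (∑ u ∈ G.neighborFinset v, (G.degree u : ℝ)) / (G.degree v : ℝ)

/-- The largest eigenvalue of the Laplacian matrix `L = D - A` of a finite graph. -/
def lapSpecRad {V : Type*} [Fintype V] [DecidableEq V] [Nonempty V]
    (G : SimpleGraph V) : ℝ :=
  letI := Classical.decRel G.Adj
  ⨆ i, (SimpleGraph.posSemidef_lapMatrix ℝ G).isHermitian.eigenvalues i

/-! The graph below is the path `0 - 1 - ⋯ - 9` with the six chords `0 6, 0 8, 1 7, 4 9, 5 8, 6 9`.
On each of its edges `m_i m_j (d_i + d_j) / (d_i d_j) ≤ 176 / 27 ≈ 6.519`, a finite check on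
degrees. The Rayleigh quotient of the Laplacian at the integer vector
`x = (10, -6, 1, 1, -6, 10, -15, 10, -15, 10)` is `6122 / 924 ≈ 6.626`, and the Rayleigh quotient
never exceeds the largest eigenvalue. -/

open Matrix SimpleGraph

open scoped MatrixOrder in
theorem Matrix.IsHermitian.dotProduct_mulVec_le_iSup_eigenvalues_mul {n : Type*} [Fintype n]
    [DecidableEq n] {A : Matrix n n ℝ} (hA : A.IsHermitian) (x : n → ℝ) :
    x ⬝ᵥ (A *ᵥ x) ≤ (⨆ i, hA.eigenvalues i) * (x ⬝ᵥ x) := by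
  have hle : A ≤ algebraMap ℝ _ (⨆ i, hA.eigenvalues i) := by
    refine le_algebraMap_of_spectrum_le fun r hr => ?_
    obtain ⟨i, rfl⟩ := hA.spectrum_real_eq_range_eigenvalues ▸ hr
    exact le_ciSup (Set.finite_range _).bddAbove i
  simpa [sub_mulVec, Algebra.algebraMap_eq_smul_one, smul_mulVec, dotProduct_sub] using
    (Matrix.le_iff.mp hle).dotProduct_mulVec_nonneg x

namespace SimpleGraph

variable {V : Type*} [Fintype V] (G : SimpleGraph V)

def edgeBound (v w : V) : ℝ :=
  avgDegR G v * avgDegR G w * (degR G v + degR G w) / (degR G v * degR G w)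

variable [DecidableRel G.Adj]

/-- `d_v m_v`, as a natural number. -/
def neighborDegreeSum (v : V) : ℕ := ∑ u ∈ G.neighborFinset v, G.degree u

theorem degR_eq (v : V) : degR G v = G.degree v := by
  unfold degR
  congr!

theorem avgDegR_eq (v : V) : avgDegR G v = G.neighborDegreeSum v / G.degree v := by
  unfold avgDegR neighborDegreeSum
  push_cast
  congr!

theorem edgeBound_le_of_nat_le {v w : V} (h : G.Adj v w) {p q : ℕ} (hq : 0 < q)
    (hpq : G.neighborDegreeSum v * G.neighborDegreeSum w * (G.degree v + G.degree w) * q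
      ≤ G.degree v ^ 2 * G.degree w ^ 2 * p) :
    G.edgeBound v w ≤ p / q := by
  have hv : (0 : ℝ) < G.degree v := by exact_mod_cast (G.degree_pos_iff_exists_adj v).2 ⟨w, h⟩
  have hw : (0 : ℝ) < G.degree w := by
    exact_mod_cast (G.degree_pos_iff_exists_adj w).2 ⟨v, h.symm⟩
  have hq' : (0 : ℝ) < q := by exact_mod_cast hq
  rw [edgeBound, avgDegR_eq, avgDegR_eq, degR_eq, degR_eq]
  field_simp
  exact_mod_cast hpq

theorem dotProduct_lapMatrix_mulVec_le_lapSpecRad [DecidableEq V] [Nonempty V] (x : V → ℝ) :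
    x ⬝ᵥ (G.lapMatrix ℝ *ᵥ x) ≤ lapSpecRad G * (x ⬝ᵥ x) := by
  unfold lapSpecRad
  convert (posSemidef_lapMatrix ℝ G).isHermitian.dotProduct_mulVec_le_iSup_eigenvalues_mul x

end SimpleGraph

def counterexampleEdges : List (Fin 10 × Fin 10) :=
  [(0, 1), (1, 2), (2, 3), (3, 4), (4, 5), (5, 6), (6, 7), (7, 8), (8, 9),
    (0, 6), (0, 8), (1, 7), (4, 9), (5, 8), (6, 9)]

def counterexampleGraph : SimpleGraph (Fin 10) where
  Adj i j := (i, j) ∈ counterexampleEdges ∨ (j, i) ∈ counterexampleEdges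
  symm := ⟨fun _ _ => Or.symm⟩
  loopless := ⟨by decide⟩

instance : DecidableRel counterexampleGraph.Adj := fun _ _ =>
  inferInstanceAs (Decidable (_ ∨ _))

theorem counterexampleGraph_connected : counterexampleGraph.Connected :=
  (pathGraph_connected 9).mono fun i j h => by
    rw [pathGraph_adj] at h
    revert i j
    decide

theorem counterexampleGraph_edgeBound_le {i j : Fin 10} (h : counterexampleGraph.Adj i j) :
    counterexampleGraph.edgeBound i j ≤ 176 / 27 := by
  exact_mod_cast counterexampleGraph.edgeBound_le_of_nat_le (p := 176) (q := 27) h (by norm_num)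
    (by revert i j; decide)

theorem le_lapSpecRad_counterexampleGraph : (3061 / 462 : ℝ) ≤ lapSpecRad counterexampleGraph := by
  -- `x` is the top Laplacian eigenvector (eigenvalue `≈ 6.6262`), scaled and rounded to integers.
  let x : Fin 10 → ℝ := ![10, -6, 1, 1, -6, 10, -15, 10, -15, 10]
  have hLx : x ⬝ᵥ (counterexampleGraph.lapMatrix ℝ *ᵥ x) = 6122 := by
    rw [← toLinearMap₂'_apply', lapMatrix_toLinearMap₂']
    simp +decide only [Fin.sum_univ_succ, Fin.sum_univ_zero, if_true, if_false]
    simp only [x, cons_val_succ, cons_val_zero]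
    norm_num
  have hxx : x ⬝ᵥ x = 924 := by
    norm_num [x, dotProduct, Fin.sum_univ_succ, Matrix.cons_val]
  have hRayleigh := counterexampleGraph.dotProduct_lapMatrix_mulVec_le_lapSpecRad x
  rw [hLx, hxx] at hRayleigh
  linarith

/-- There exists a finite simple connected graph `G` with at least two vertices whose
Laplacian spectral radius exceeds the conjectured edge-maximum bound. -/
theorem exists_counterexample_bound64 :
    ∃ (V : Type) (_ : Fintype V) (_ : DecidableEq V) (_ : Nonempty V)
      (G : SimpleGraph V), G.Connected ∧ 2 ≤ Fintype.card V ∧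
      ∀ i j : V, G.Adj i j →
        (fun di mi dj mj => mi * mj * (di + dj) / (di * dj))
          (degR G i) (avgDegR G i) (degR G j) (avgDegR G j) < lapSpecRad G := by
  refine ⟨Fin 10, inferInstance, inferInstance, inferInstance, counterexampleGraph,
    counterexampleGraph_connected, by norm_num, fun i j h => ?_⟩
  calc counterexampleGraph.edgeBound i j ≤ 176 / 27 := counterexampleGraph_edgeBound_le h
    _ < 3061 / 462 := by norm_num
    _ ≤ lapSpecRad counterexampleGraph := le_lapSpecRad_counterexampleGraph
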